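/- Let G be a group, P ≤ G, m ∈ Z(P). The coset quandle P\G is connected as a quandle (i.e., the group of inner automorphisms generated by left translations, together with their inverses, acts transitively on P\G) if and only if the normal closure of m in G, multiplied by P, is all of G: P·⟨⟨m⟩⟩ = G, where ⟨⟨m⟩⟩ is the normal closure of m. -/
import Mathlib


open scoped Pointwise

variable {G : Type*} [Group G]

/-- If `h'` and `h` lie in the same right coset of `P` and `m` is central in `P`,
then `h'⁻¹ * m * h' = h⁻¹ * m * h`. -/
theorem conj_eq_of_rightRel (P : Subgroup G) {m : G} (hm : m ∈ P)
    (hc : ∀ a ∈ P, a * m = m * a) {h h' : G} (ha : h' * h⁻¹ ∈ P) :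
    h'⁻¹ * m * h' = h⁻¹ * m * h := by
  have key : h' * h⁻¹ * m = m * (h' * h⁻¹) := hc _ ha
  have e := congrArg (fun x => h'⁻¹ * x * h) key
  simp only [mul_assoc] at e ⊢
  group at e ⊢
  exact e.symm

/-- The Joyce coset quandle operation on right cosets `P\G`:
`(Ph) ▷ (Pg) = P (g * h⁻¹ * m * h)`. The first argument acts on the second. -/
def cosetQuandleOp (P : Subgroup G) (m : G) (hm : m ∈ P)
    (hc : ∀ a ∈ P, a * m = m * a) :
    Quotient (QuotientGroup.rightRel P) → Quotient (QuotientGroup.rightRel P) →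
      Quotient (QuotientGroup.rightRel P) :=
  Quotient.lift₂ (fun h g => (⟦g * h⁻¹ * m * h⟧ : Quotient (QuotientGroup.rightRel P)))
    (by
      intro h g h' g' hh hg
      apply Quotient.sound
      have hh' := QuotientGroup.rightRel_apply.mp hh
      have hg' := QuotientGroup.rightRel_apply.mp hg
      refine QuotientGroup.rightRel_apply.mpr ?_
      have e := conj_eq_of_rightRel P hm hc (h := h) (h' := h') hh'
      have key : g' * h'⁻¹ * m * h' * (g * h⁻¹ * m * h)⁻¹ = g' * g⁻¹ := by
        calc g' * h'⁻¹ * m * h' * (g * h⁻¹ * m * h)⁻¹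
            = g' * (h'⁻¹ * m * h') * (h⁻¹ * m * h)⁻¹ * g⁻¹ := by group
          _ = g' * (h⁻¹ * m * h) * (h⁻¹ * m * h)⁻¹ * g⁻¹ := by rw [e]
          _ = g' * g⁻¹ := by group
      exact key ▸ hg')

/-- The inverse quandle operation, given by `(Ph) ▷⁻¹ (Pg) = P (g * h⁻¹ * m⁻¹ * h)`. -/
def cosetQuandleInvOp (P : Subgroup G) (m : G) (hm : m ∈ P)
    (hc : ∀ a ∈ P, a * m = m * a) :
    Quotient (QuotientGroup.rightRel P) → Quotient (QuotientGroup.rightRel P) →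
      Quotient (QuotientGroup.rightRel P) :=
  cosetQuandleOp P m⁻¹ (inv_mem hm)
    (fun a ha => (Commute.inv_right (show Commute a m from hc a ha) : a * m⁻¹ = m⁻¹ * a))

/-- The coset quandle `P\G` is connected (the group generated by the translations and
their inverses acts transitively) if and only if `P · ⟨⟨m⟩⟩ = G`, where `⟨⟨m⟩⟩` is the
normal closure of `m` in `G`. -/
theorem coset_quandle_connected_iff (P : Subgroup G) (m : G) (hm : m ∈ P)
    (hc : ∀ a ∈ P, a * m = m * a) :
    (∀ x y : Quotient (QuotientGroup.rightRel P),
        ∃ L : List (G × Bool),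
          List.foldl
            (fun z p => if p.2 then cosetQuandleOp P m hm hc ⟦p.1⟧ z
              else cosetQuandleInvOp P m hm hc ⟦p.1⟧ z) x L = y) ↔
      (P : Set G) * (Subgroup.normalClosure {m} : Set G) = Set.univ := by
  classical
  set N := Subgroup.normalClosure ({m} : Set G) with hNdef
  have hmN : m ∈ N := Subgroup.subset_normalClosure (Set.mem_singleton m)
  have hNnorm : N.Normal := Subgroup.normalClosure_normal
  set f : Quotient (QuotientGroup.rightRel P) → G × Bool → Quotient (QuotientGroup.rightRel P) :=
    fun z p => if p.2 then cosetQuandleOp P m hm hc ⟦p.1⟧ z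
      else cosetQuandleInvOp P m hm hc ⟦p.1⟧ z with hf
  have fstep_true : ∀ (h a : G), f ⟦a⟧ (h, true) = ⟦a * (h⁻¹ * m * h)⟧ := by
    intro h a
    show (⟦a * h⁻¹ * m * h⟧ : Quotient (QuotientGroup.rightRel P)) = ⟦a * (h⁻¹ * m * h)⟧
    congr 1
    group
  have fstep_false : ∀ (h a : G), f ⟦a⟧ (h, false) = ⟦a * (h⁻¹ * m * h)⁻¹⟧ := by
    intro h a
    show (⟦a * h⁻¹ * m⁻¹ * h⟧ : Quotient (QuotientGroup.rightRel P)) = ⟦a * (h⁻¹ * m * h)⁻¹⟧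
    congr 1
    group
  constructor
  · intro H
    ext g
    simp only [Set.mem_univ, iff_true]
    obtain ⟨L, hL⟩ := H ⟦1⟧ ⟦g⟧
    have key : ∀ (L : List (G × Bool)) (a : G), ∃ w ∈ N,
        List.foldl f ⟦a⟧ L = ⟦a * w⟧ := by
      intro L
      induction L with
      | nil => intro a; exact ⟨1, one_mem N, by rw [List.foldl_nil, mul_one]⟩
      | cons p L ih =>
        intro a
        rcases p with ⟨h, b⟩
        have hconj : h⁻¹ * m * h ∈ N := by
          have := hNnorm.conj_mem m hmN h⁻¹
          simpa using this
        cases b with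
        | true =>
          obtain ⟨w, hw, hfold⟩ := ih (a * (h⁻¹ * m * h))
          refine ⟨h⁻¹ * m * h * w, N.mul_mem hconj hw, ?_⟩
          rw [List.foldl_cons, fstep_true, hfold, mul_assoc]
        | false =>
          obtain ⟨w, hw, hfold⟩ := ih (a * (h⁻¹ * m * h)⁻¹)
          refine ⟨(h⁻¹ * m * h)⁻¹ * w, N.mul_mem (N.inv_mem hconj) hw, ?_⟩
          rw [List.foldl_cons, fstep_false, hfold, mul_assoc]
    obtain ⟨w, hw, hfold⟩ := key L 1
    rw [hfold] at hL
    have hp : g * (1 * w)⁻¹ ∈ P := QuotientGroup.rightRel_apply.mp (Quotient.exact hL)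
    refine Set.mem_mul.mpr ⟨g * (1 * w)⁻¹, hp, w, hw, ?_⟩
    group
  · intro H x y
    obtain ⟨a, rfl⟩ := Quotient.exists_rep x
    obtain ⟨b, rfl⟩ := Quotient.exists_rep y
    have hba : (b * a⁻¹) ∈ (P : Set G) * (N : Set G) := by rw [H]; trivial
    obtain ⟨p, hp, n, hn, hpn⟩ := Set.mem_mul.mp hba
    have key : ∀ w ∈ N, ∀ a : G,
        (∃ L, List.foldl f ⟦a⟧ L = ⟦a * w⟧) ∧
        (∃ L, List.foldl f ⟦a⟧ L = ⟦a * w⁻¹⟧) := by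
      intro w hw
      refine Subgroup.closure_induction
        (p := fun w _ => ∀ a : G, (∃ L, List.foldl f ⟦a⟧ L = ⟦a * w⟧) ∧
          (∃ L, List.foldl f ⟦a⟧ L = ⟦a * w⁻¹⟧)) ?_ ?_ ?_ ?_ hw
      · rintro x hx a
        obtain ⟨m', hm', hcj⟩ := Group.mem_conjugatesOfSet_iff.mp hx
        rw [Set.mem_singleton_iff] at hm'; subst hm'
        obtain ⟨c, hc1⟩ := isConj_iff.mp hcj
        constructor
        · refine ⟨[(c⁻¹, true)], ?_⟩
          rw [List.foldl_cons, fstep_true, List.foldl_nil, inv_inv, hc1]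
        · refine ⟨[(c⁻¹, false)], ?_⟩
          rw [List.foldl_cons, fstep_false, List.foldl_nil, inv_inv, hc1]
      · intro a
        exact ⟨⟨[], by simp⟩, ⟨[], by simp⟩⟩
      · intro u v hu hv ihu ihv a
        constructor
        · obtain ⟨L1, h1⟩ := (ihu a).1
          obtain ⟨L2, h2⟩ := (ihv (a * u)).1
          exact ⟨L1 ++ L2, by rw [List.foldl_append, h1, h2, mul_assoc]⟩
        · obtain ⟨L1, h1⟩ := (ihv a).2
          obtain ⟨L2, h2⟩ := (ihu (a * v⁻¹)).2
          exact ⟨L1 ++ L2, by rw [List.foldl_append, h1, h2, mul_assoc, mul_inv_rev]⟩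
      · intro u hu ihu a
        exact ⟨(ihu a).2, by simpa using (ihu a).1⟩
    have hconj : a⁻¹ * n * a ∈ N := by simpa using hNnorm.conj_mem n hn a⁻¹
    obtain ⟨⟨L, hL⟩, -⟩ := key _ hconj a
    refine ⟨L, ?_⟩
    rw [hL]
    apply Quotient.sound
    refine QuotientGroup.rightRel_apply.mpr ?_
    have : b * (a * (a⁻¹ * n * a))⁻¹ = p := by
      have hb : b = p * n * a := by rw [hpn]; group
      rw [hb]; group
    rw [this]; exact hp
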